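/- arXiv:math/0511374 — 3 statements merged into one kernel-verified Lean document; each statement's English description precedes it below -/
import Mathlib

section
/- In a shortest word over {a_1,...,a_n} representing a given element of the Kiselman semigroup K_n, for each i ≤ ⌈n/2⌉ the letter a_i occurs at most 2^{i−1} times, and for each i ≥ ⌈(n+1)/2⌉ the letter a_i occurs at most 2^{n−i} times. -/
/-- The defining relations of the Kiselman semigroup `K_n`:
`aᵢ² = aᵢ`, and `aᵢaⱼaᵢ = aⱼaᵢaⱼ = aⱼaᵢ` for `i < j`. -/
inductive KisRel (n : ℕ) : FreeMonoid (Fin n) → FreeMonoid (Fin n) → Prop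
  | idem (i : Fin n) : KisRel n (.of i * .of i) (.of i)
  | braid₁ {i j : Fin n} (h : i < j) :
      KisRel n (.of i * .of j * .of i) (.of j * .of i)
  | braid₂ {i j : Fin n} (h : i < j) :
      KisRel n (.of j * .of i * .of j) (.of j * .of i)

/-- The Kiselman semigroup (monoid) `K_n`. -/
abbrev Kiselman (n : ℕ) := PresentedMonoid (KisRel n)

/-- The canonical projection from the free monoid on the generators to `K_n`. -/
def kmk (n : ℕ) : FreeMonoid (Fin n) →* Kiselman n := PresentedMonoid.mk (KisRel n)

/-- The generator `a_{i+1}` (0-indexed: `ka i` is the paper's `a_{i+1}`). -/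
def ka {n : ℕ} (i : Fin n) : Kiselman n := PresentedMonoid.of (KisRel n) i

/-- The idempotent `e_X`: the product of the generators indexed by `X` in strictly
decreasing order of indices. -/
def eX {n : ℕ} (X : Finset (Fin n)) : Kiselman n :=
  kmk n (FreeMonoid.ofList ((X.sort (· ≤ ·)).reverse))

/-!
If a shortest word contains a factor `aᵢ u aᵢ` in which every letter of `u` has index at least
`i`, the relations give `aᵢ u aᵢ = u aᵢ` (dually `aᵢ u aᵢ = aᵢ u` when all indices are at most
`i`), and the word could be shortened. So between any two occurrences of `aᵢ` there is a letter
of smaller index and one of larger index. The first fact gives `#aᵢ ≤ 1 + Σ_{j<i} #aⱼ`, hence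
`#aᵢ ≤ 2^{i-1}` by induction on `i`; the second gives `#aᵢ ≤ 2^{n-i}` in the same way with the
order of the indices reversed.
-/

theorem IsIdempotentElem.mul_list_prod_mul_eq_prod_mul {M : Type*} [Monoid M] {x : M}
    (hx : IsIdempotentElem x) : ∀ {l : List M}, (∀ y ∈ l, x * y * x = y * x) →
      x * l.prod * x = l.prod * x
  | [], _ => by simpa using hx.eq
  | y :: l, h => by
    have ih := hx.mul_list_prod_mul_eq_prod_mul fun z hz => h z (List.mem_cons_of_mem y hz)
    calc x * (y :: l).prod * x = x * y * (x * l.prod * x) := by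
          rw [ih, List.prod_cons]; simp only [mul_assoc]
      _ = (x * y * x) * l.prod * x := by simp only [mul_assoc]
      _ = y * (x * l.prod * x) := by rw [h y List.mem_cons_self]; simp only [mul_assoc]
      _ = (y :: l).prod * x := by rw [ih, List.prod_cons, mul_assoc]

theorem IsIdempotentElem.mul_list_prod_mul_eq_mul_prod {M : Type*} [Monoid M] {x : M}
    (hx : IsIdempotentElem x) {l : List M} (h : ∀ y ∈ l, x * y * x = x * y) :
      x * l.prod * x = x * l.prod := by
  have hx' : IsIdempotentElem (MulOpposite.op x) := congrArg MulOpposite.op hx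
  have := hx'.mul_list_prod_mul_eq_prod_mul (l := (l.map MulOpposite.op).reverse)
    (by simpa [← MulOpposite.op_mul, mul_assoc] using fun y hy => congrArg MulOpposite.op (h y hy))
  apply MulOpposite.op_injective
  simpa [MulOpposite.op_list_prod, mul_assoc] using this

namespace List

variable {α : Type*}

def SeparatedBy (a : α) (p : α → Bool) (l : List α) : Prop :=
  ∀ x u y, l = x ++ a :: (u ++ a :: y) → ∃ b ∈ u, p b

theorem SeparatedBy.of_cons {a b : α} {p : α → Bool} {l : List α}
    (h : (b :: l).SeparatedBy a p) : l.SeparatedBy a p :=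
  fun x u y e => h (b :: x) u y (by rw [e, cons_append])

variable [DecidableEq α] {a : α} {p : α → Bool}

/-- The second conjunct strengthens the induction hypothesis enough to pass a leading `a`. -/
private theorem count_le_countP_of_separatedBy (ha : p a = false) : ∀ {l : List α},
    l.SeparatedBy a p →
      l.count a ≤ l.countP p + 1 ∧ ((a :: l).SeparatedBy a p → l.count a ≤ l.countP p)
  | [], _ => by simp
  | b :: l, h => by
    obtain ⟨ih, ih_cons⟩ := count_le_countP_of_separatedBy ha h.of_cons
    refine ⟨?_, fun h' => ?_⟩
    · by_cases hb : b = a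
      · subst hb
        have := ih_cons h
        simp only [count_cons_self, countP_cons]
        omega
      · simp only [count_cons_of_ne hb, countP_cons]
        omega
    · by_cases hpb : p b
      · have hb : b ≠ a := by rintro rfl; simp [ha] at hpb
        simp only [count_cons_of_ne hb, countP_cons, hpb, if_true]
        omega
      · have hb : b ≠ a := by
          rintro rfl
          simpa using h' [] [] l rfl
        have hsep : (a :: l).SeparatedBy a p := by
          rintro (_ | ⟨_, x⟩) u y e
          · obtain ⟨c, hc, hpc⟩ := h' [] (b :: u) y (by simp_all)
            exact ⟨c, (mem_cons.1 hc).resolve_left (by rintro rfl; simp_all), hpc⟩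
          · exact h' (a :: b :: x) u y (by simp_all)
        simp only [count_cons_of_ne hb, countP_cons, hpb]
        simpa using ih_cons hsep

theorem SeparatedBy.count_le_countP_add_one (ha : p a = false) {l : List α}
    (h : l.SeparatedBy a p) : l.count a ≤ l.countP p + 1 :=
  (count_le_countP_of_separatedBy ha h).1

theorem countP_lt_add_one (l : List ℕ) (m : ℕ) :
    l.countP (· < m + 1) = l.countP (· < m) + l.count m := by
  induction l with
  | nil => rfl
  | cons b l ih =>
    simp only [countP_cons, count_cons, ih, decide_eq_true_eq, beq_iff_eq]
    split_ifs <;> omega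

theorem countP_lt_add_one_le_two_pow {l : List ℕ}
    (h : ∀ c ∈ l, l.count c ≤ l.countP (· < c) + 1) (m : ℕ) :
    l.countP (· < m) + 1 ≤ 2 ^ m := by
  induction m with
  | zero => simp
  | succ m ih =>
    have hm : l.count m ≤ l.countP (· < m) + 1 := by
      by_cases hml : m ∈ l
      · exact h m hml
      · simp [count_eq_zero.2 hml]
    rw [countP_lt_add_one, pow_succ]
    omega

theorem count_le_two_pow {l : List ℕ} (h : ∀ c ∈ l, l.count c ≤ l.countP (· < c) + 1)
    (c : ℕ) : l.count c ≤ 2 ^ c := by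
  by_cases hc : c ∈ l
  · exact (h c hc).trans (countP_lt_add_one_le_two_pow h c)
  · simp [count_eq_zero.2 hc]

theorem count_le_two_pow_of_injective {α : Type*} [DecidableEq α] {f : α → ℕ}
    (hf : f.Injective) {l : List α}
    (h : ∀ c ∈ l, l.count c ≤ l.countP (fun j => f j < f c) + 1) (c : α) :
    l.count c ≤ 2 ^ f c := by
  rw [← count_map_of_injective _ _ hf]
  refine count_le_two_pow ?_ (f c)
  simp only [mem_map, forall_exists_index, and_imp]
  rintro _ c hc rfl
  rw [count_map_of_injective _ _ hf, countP_map]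
  exact h c hc

end List

namespace Kiselman

variable {n : ℕ}

theorem kmk_ofList (l : List (Fin n)) : kmk n (.ofList l) = (l.map ka).prod := by
  rw [show kmk n = FreeMonoid.lift ka from FreeMonoid.hom_eq fun _ => rfl,
    FreeMonoid.lift_ofList]

theorem isIdempotentElem_ka (i : Fin n) : IsIdempotentElem (ka i) :=
  PresentedMonoid.mk_eq_mk_of_rel (KisRel.idem i)

theorem ka_mul_ka_mul_ka_of_le {i j : Fin n} (h : i ≤ j) : ka i * ka j * ka i = ka j * ka i := by
  rcases h.lt_or_eq with h | rfl
  · exact PresentedMonoid.mk_eq_mk_of_rel (KisRel.braid₁ h)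
  · simp only [(isIdempotentElem_ka i).eq]

theorem ka_mul_ka_mul_ka_of_ge {i j : Fin n} (h : j ≤ i) : ka i * ka j * ka i = ka i * ka j := by
  rcases h.lt_or_eq with h | rfl
  · exact PresentedMonoid.mk_eq_mk_of_rel (KisRel.braid₂ h)
  · simp only [(isIdempotentElem_ka j).eq]

theorem kmk_ofList_eq_of_le {i : Fin n} {x u y : List (Fin n)} (hu : ∀ j ∈ u, i ≤ j) :
    kmk n (.ofList (x ++ i :: (u ++ i :: y))) = kmk n (.ofList (x ++ u ++ i :: y)) := by
  have key : ka i * (u.map ka).prod * ka i = (u.map ka).prod * ka i :=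
    (isIdempotentElem_ka i).mul_list_prod_mul_eq_prod_mul (by
      simpa using fun j hj => ka_mul_ka_mul_ka_of_le (hu j hj))
  simpa only [kmk_ofList, List.map_append, List.map_cons, List.prod_append, List.prod_cons,
    mul_assoc] using congrArg (fun z => (x.map ka).prod * z * (y.map ka).prod) key

theorem kmk_ofList_eq_of_ge {i : Fin n} {x u y : List (Fin n)} (hu : ∀ j ∈ u, j ≤ i) :
    kmk n (.ofList (x ++ i :: (u ++ i :: y))) = kmk n (.ofList (x ++ i :: (u ++ y))) := by
  have key : ka i * (u.map ka).prod * ka i = ka i * (u.map ka).prod :=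
    (isIdempotentElem_ka i).mul_list_prod_mul_eq_mul_prod (by
      simpa using fun j hj => ka_mul_ka_mul_ka_of_ge (hu j hj))
  simpa only [kmk_ofList, List.map_append, List.map_cons, List.prod_append, List.prod_cons,
    mul_assoc] using congrArg (fun z => (x.map ka).prod * z * (y.map ka).prod) key

def IsShortest (w : FreeMonoid (Fin n)) : Prop :=
  ∀ v : FreeMonoid (Fin n), kmk n v = kmk n w → w.toList.length ≤ v.toList.length

theorem IsShortest.separatedBy_lt {w : FreeMonoid (Fin n)} (hw : IsShortest w) (i : Fin n) :
    w.toList.SeparatedBy i (· < i) := by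
  intro x u y h
  by_contra! hu
  have := hw (.ofList (x ++ u ++ i :: y)) (by
    rw [← kmk_ofList_eq_of_le (by simpa using hu), ← h, FreeMonoid.ofList_toList])
  simp [h] at this

theorem IsShortest.separatedBy_gt {w : FreeMonoid (Fin n)} (hw : IsShortest w) (i : Fin n) :
    w.toList.SeparatedBy i (i < ·) := by
  intro x u y h
  by_contra! hu
  have := hw (.ofList (x ++ i :: (u ++ y))) (by
    rw [← kmk_ofList_eq_of_ge (by simpa using hu), ← h, FreeMonoid.ofList_toList])
  simp [h] at this

end Kiselman

/-- In a shortest word representing an element of `K_n`, the letter `a_{i+1}` (0-indexed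
`i : Fin n`, 1-indexed index `i+1`) occurs at most `2^i` times when `i+1 ≤ ⌈n/2⌉`, and
at most `2^{n-(i+1)}` times when `i+1 ≥ ⌈(n+1)/2⌉`. -/
theorem kiselman_shortest_word_counts (n : ℕ) (x : Kiselman n) (w : FreeMonoid (Fin n))
    (hwx : kmk n w = x)
    (hmin : ∀ v : FreeMonoid (Fin n), kmk n v = x → w.toList.length ≤ v.toList.length)
    (i : Fin n) :
    ((i : ℕ) + 1 ≤ (n + 1) / 2 → w.toList.count i ≤ 2 ^ (i : ℕ)) ∧
    ((n + 2) / 2 ≤ (i : ℕ) + 1 → w.toList.count i ≤ 2 ^ (n - ((i : ℕ) + 1))) := by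
  subst hwx
  have hw : Kiselman.IsShortest w := hmin
  have below c (_ : c ∈ w.toList) :
      w.toList.count c ≤ w.toList.countP (fun j => j.val < c.val) + 1 := by
    simpa only [Fin.val_fin_lt] using (hw.separatedBy_lt c).count_le_countP_add_one (by simp)
  have above c (_ : c ∈ w.toList) :
      w.toList.count c ≤ w.toList.countP (fun j => j.rev.val < c.rev.val) + 1 := by
    simpa only [Fin.val_fin_lt, Fin.rev_lt_rev] using
      (hw.separatedBy_gt c).count_le_countP_add_one (by simp)
  refine ⟨fun _ => List.count_le_two_pow_of_injective Fin.val_injective below i, fun _ => ?_⟩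
  rw [← Fin.val_rev]
  exact List.count_le_two_pow_of_injective (Fin.val_injective.comp Fin.rev_injective) above i
end

section
/- For every subset X = {i_1 > i_2 > ... > i_k} of {1,...,n}, the element e_X = a_{i_1} a_{i_2} ··· a_{i_k} (product in strictly decreasing order of indices, with e_∅ the identity) is an idempotent of the Kiselman semigroup K_n; moreover every idempotent of K_n equals e_X for some subset X, so K_n has exactly 2^n idempotents. -/
namespace Kiselman

open Submonoid

variable {n : ℕ}

theorem ka_mul_self (i : Fin n) : ka i * ka i = ka i :=
  PresentedMonoid.mk_eq_mk_of_rel (.idem i)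

theorem ka_mul_ka_mul_ka_of_lt {i j : Fin n} (h : i < j) : ka i * ka j * ka i = ka j * ka i :=
  PresentedMonoid.mk_eq_mk_of_rel (.braid₁ h)

theorem ka_mul_ka_mul_ka_of_gt {i j : Fin n} (h : j < i) : ka i * ka j * ka i = ka i * ka j :=
  PresentedMonoid.mk_eq_mk_of_rel (.braid₂ h)

@[elab_as_elim]
theorem induction_on {motive : Kiselman n → Prop} (f : Kiselman n) (one : motive 1)
    (ka_mul : ∀ i f, motive f → motive (ka i * f)) : motive f := by
  refine PresentedMonoid.inductionOn f fun w => ?_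
  induction w using FreeMonoid.inductionOn' with
  | one => exact one
  | of_mul i w ih => exact ka_mul i _ ih

theorem ka_mul_mul_ka_of_mem_closure {X : Finset (Fin n)} {j : Fin n} (hX : ∀ i ∈ X, i < j)
    {z : Kiselman n} (hz : z ∈ closure (ka '' X)) : ka j * z * ka j = ka j * z := by
  induction hz using closure_induction with
  | mem _ h =>
    obtain ⟨i, hi, rfl⟩ := h
    exact ka_mul_ka_mul_ka_of_gt (hX i hi)
  | one => rw [mul_one, ka_mul_self]
  | mul x y _ _ hx hy =>
    calc ka j * (x * y) * ka j = ka j * x * ka j * (y * ka j) := by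
          rw [hx]; simp only [mul_assoc]
      _ = ka j * x * (ka j * y * ka j) := by simp only [mul_assoc]
      _ = ka j * (x * y) := by rw [hy, ← mul_assoc, hx, mul_assoc]

theorem ka_mul_mul_ka_pow {X : Finset (Fin n)} {j : Fin n} (hX : ∀ i ∈ X, i < j)
    {z : Kiselman n} (hz : z ∈ closure (ka '' X)) (k : ℕ) :
    ka j * (z * ka j) ^ k = ka j * z ^ k := by
  induction k with
  | zero => simp
  | succ k ih =>
    calc ka j * (z * ka j) ^ (k + 1) = ka j * z ^ (k + 1) * ka j := by
          rw [pow_succ, ← mul_assoc, ih, pow_succ]; simp only [mul_assoc]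
      _ = ka j * z ^ (k + 1) := ka_mul_mul_ka_of_mem_closure hX (pow_mem hz _)

theorem mem_closure_or_eq_mul_ka_mul {X : Finset (Fin n)} {a : Fin n} (hX : ∀ i ∈ X, i < a)
    {f : Kiselman n} (hf : f ∈ closure (ka '' ↑(insert a X))) :
    f ∈ closure (ka '' X) ∨
      ∃ p ∈ closure (ka '' X), ∃ t ∈ closure (ka '' X), f = p * ka a * t := by
  induction hf using closure_induction with
  | mem _ h =>
    obtain ⟨i, hi, rfl⟩ := h
    rcases Finset.mem_insert.1 hi with rfl | hi
    · exact .inr ⟨1, one_mem _, 1, one_mem _, by simp⟩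
    · exact .inl (subset_closure ⟨i, hi, rfl⟩)
  | one => exact .inl (one_mem _)
  | mul x y _ _ hx hy =>
    rcases hx with hx | ⟨p, hp, t, ht, rfl⟩ <;> rcases hy with hy | ⟨p', hp', t', ht', rfl⟩
    · exact .inl (mul_mem hx hy)
    · exact .inr ⟨x * p', mul_mem hx hp', t', ht', by simp only [mul_assoc]⟩
    · exact .inr ⟨p, hp, t * y, mul_mem ht hy, by simp only [mul_assoc]⟩
    · refine .inr ⟨p, hp, t * p' * t', mul_mem (mul_mem ht hp') ht', ?_⟩
      calc p * ka a * t * (p' * ka a * t') = p * (ka a * (t * p') * ka a) * t' := by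
            simp only [mul_assoc]
        _ = p * ka a * (t * p' * t') := by
            rw [ka_mul_mul_ka_of_mem_closure hX (mul_mem ht hp')]; simp only [mul_assoc]

/-- `avoids f i = 0` if the generator `a_i` occurs in `f`, and `avoids f i = 1` otherwise. -/
def avoids : Kiselman n →* (Fin n → ℕ) :=
  PresentedMonoid.lift (fun j i => if j = i then 0 else 1) (by
    rintro _ _ (_ | _ | _) <;> funext i <;>
      simp only [map_mul, FreeMonoid.lift_eval_of, Pi.mul_apply] <;> split_ifs <;> rfl)

def supp (f : Kiselman n) : Finset (Fin n) := {i | avoids f i = 0}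

theorem supp_one : supp (1 : Kiselman n) = ∅ := by ext; simp [supp]

theorem supp_ka (i : Fin n) : supp (ka i) = {i} := by ext; simp [supp, ka, avoids, eq_comm]

theorem supp_mul (f g : Kiselman n) : supp (f * g) = supp f ∪ supp g := by
  ext; simp [supp]

theorem mem_closure_iff_supp_subset {X : Finset (Fin n)} {f : Kiselman n} :
    f ∈ closure (ka '' ↑X) ↔ supp f ⊆ X := by
  refine ⟨fun hf => ?_, fun hf => ?_⟩
  · induction hf using closure_induction with
    | mem _ h =>
      obtain ⟨i, hi, rfl⟩ := h
      simpa [supp_ka] using hi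
    | one => simp [supp_one]
    | mul x y _ _ hx hy => rw [supp_mul]; exact Finset.union_subset hx hy
  · induction f using induction_on with
    | one => exact one_mem _
    | ka_mul i f ih =>
      rw [supp_mul, supp_ka, Finset.singleton_union, Finset.insert_subset_iff] at hf
      exact mul_mem (subset_closure ⟨i, hf.1, rfl⟩) (ih hf.2)

theorem eX_empty : eX (∅ : Finset (Fin n)) = 1 := by simp [eX]

theorem eX_insert_of_forall_lt {X : Finset (Fin n)} {a : Fin n} (hX : ∀ i ∈ X, i < a) :
    eX (insert a X) = ka a * eX X := by
  have hsort : (insert a X).sort (· ≤ ·) = X.sort (· ≤ ·) ++ [a] := by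
    have hpair : (X.sort (· ≤ ·) ++ [a]).Pairwise (· ≤ ·) := by
      simpa [List.pairwise_append] using fun i hi => (hX i hi).le
    have hnodup : (X.sort (· ≤ ·) ++ [a]).Nodup := by
      simpa [List.nodup_append] using fun hi => lt_irrefl a (hX a hi)
    rw [← (List.toFinset_sort _ hnodup).2 hpair]
    congr 1
    ext; simp
  simp only [eX, hsort, List.reverse_append, List.reverse_singleton, List.singleton_append,
    FreeMonoid.ofList_cons, map_mul]
  rfl

theorem eX_mem_closure (X : Finset (Fin n)) : eX X ∈ closure (ka '' ↑X) := by
  induction X using Finset.induction_on_max with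
  | empty => simp [eX_empty]
  | insert a X hX ih =>
    rw [eX_insert_of_forall_lt hX]
    refine mul_mem (subset_closure ⟨a, by simp, rfl⟩) (closure_mono (Set.image_mono ?_) ih)
    simp

theorem eX_mul_ka_of_mem {X : Finset (Fin n)} {i : Fin n} (hi : i ∈ X) : eX X * ka i = eX X := by
  induction X using Finset.induction_on_max with
  | empty => simp at hi
  | insert a X hX ih =>
    rw [eX_insert_of_forall_lt hX]
    rcases Finset.mem_insert.1 hi with rfl | hi
    · exact ka_mul_mul_ka_of_mem_closure hX (eX_mem_closure X)
    · rw [mul_assoc, ih hi]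

theorem ka_mul_eX_of_mem {X : Finset (Fin n)} {i : Fin n} (hi : i ∈ X) : ka i * eX X = eX X := by
  induction X using Finset.induction_on_max with
  | empty => simp at hi
  | insert a X hX ih =>
    rw [eX_insert_of_forall_lt hX]
    rcases Finset.mem_insert.1 hi with rfl | hi
    · rw [← mul_assoc, ka_mul_self]
    · calc ka i * (ka a * eX X) = ka i * ka a * ka i * eX X := by
            rw [mul_assoc _ (ka i), ih hi, mul_assoc]
        _ = ka a * eX X := by
            rw [ka_mul_ka_mul_ka_of_lt (hX i hi), mul_assoc, ih hi]

theorem eX_mul_of_mem_closure {X : Finset (Fin n)} {g : Kiselman n}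
    (hg : g ∈ closure (ka '' ↑X)) : eX X * g = eX X := by
  induction hg using closure_induction with
  | mem _ h =>
    obtain ⟨i, hi, rfl⟩ := h
    exact eX_mul_ka_of_mem hi
  | one => exact mul_one _
  | mul x y _ _ hx hy => rw [← mul_assoc, hx, hy]

theorem mul_eX_of_mem_closure {X : Finset (Fin n)} {g : Kiselman n}
    (hg : g ∈ closure (ka '' ↑X)) : g * eX X = eX X := by
  induction hg using closure_induction with
  | mem _ h =>
    obtain ⟨i, hi, rfl⟩ := h
    exact ka_mul_eX_of_mem hi
  | one => exact one_mul _
  | mul x y _ _ hx hy => rw [mul_assoc, hy, hx]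

theorem isIdempotentElem_eX (X : Finset (Fin n)) : IsIdempotentElem (eX X) :=
  eX_mul_of_mem_closure (eX_mem_closure X)

theorem supp_eX (X : Finset (Fin n)) : supp (eX X) = X := by
  induction X using Finset.induction_on_max with
  | empty => rw [eX_empty, supp_one]
  | insert a X hX ih => rw [eX_insert_of_forall_lt hX, supp_mul, supp_ka, ih, Finset.insert_eq]

theorem eX_injective : Function.Injective (eX : Finset (Fin n) → Kiselman n) :=
  Function.LeftInverse.injective supp_eX

theorem exists_pow_succ_eq_eX_supp_of_supp_subset {X : Finset (Fin n)} {f : Kiselman n}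
    (hf : supp f ⊆ X) : ∃ N, f ^ (N + 1) = eX (supp f) := by
  induction X using Finset.induction_on_max generalizing f with
  | empty =>
    obtain rfl : f = 1 := by simpa using mem_closure_iff_supp_subset.2 hf
    exact ⟨0, by rw [supp_one, eX_empty, pow_one]⟩
  | insert a X hX ih =>
    rcases mem_closure_or_eq_mul_ka_mul hX (mem_closure_iff_supp_subset.2 hf) with
      hf | ⟨p, hp, t, ht, rfl⟩
    · exact ih (mem_closure_iff_supp_subset.1 hf)
    set Y := supp (t * p)
    have hY : Y ⊆ X := mem_closure_iff_supp_subset.1 (mul_mem ht hp)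
    obtain ⟨N, hN⟩ := ih hY
    have hsupp : supp (p * ka a * t) = insert a Y := by
      simp only [Y, supp_mul, supp_ka]; grind
    have hpt : p ∈ closure (ka '' ↑(insert a Y)) ∧ t ∈ closure (ka '' ↑(insert a Y)) := by
      simp only [mem_closure_iff_supp_subset, Y, supp_mul]
      exact ⟨(Finset.subset_union_right).trans (Finset.subset_insert _ _),
        (Finset.subset_union_left).trans (Finset.subset_insert _ _)⟩
    refine ⟨N + 1, ?_⟩
    calc (p * ka a * t) ^ (N + 1 + 1) = p * (ka a * (t * p * ka a) ^ (N + 1)) * t := by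
          rw [pow_succ, ← mul_assoc, mul_pow_mul]; simp only [mul_assoc]
      _ = p * eX (insert a Y) * t := by
          rw [ka_mul_mul_ka_pow hX (mul_mem ht hp), hN,
            eX_insert_of_forall_lt fun i hi => hX i (hY hi)]
      _ = eX (supp (p * ka a * t)) := by
          rw [mul_eX_of_mem_closure hpt.1, eX_mul_of_mem_closure hpt.2, hsupp]

theorem exists_pow_succ_eq_eX_supp (f : Kiselman n) : ∃ N, f ^ (N + 1) = eX (supp f) :=
  exists_pow_succ_eq_eX_supp_of_supp_subset (Finset.subset_univ _)

end Kiselman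

/-- Proposition 2: each `e_X` is an idempotent of `K_n`, every idempotent equals some
`e_X`, and `K_n` has exactly `2^n` idempotents. -/
theorem kiselman_idempotents (n : ℕ) :
    (∀ X : Finset (Fin n), IsIdempotentElem (eX X)) ∧
    (∀ f : Kiselman n, IsIdempotentElem f → ∃ X : Finset (Fin n), f = eX X) ∧
    Nat.card {f : Kiselman n // IsIdempotentElem f} = 2 ^ n := by
  have eq_eX_supp (f : Kiselman n) (hf : IsIdempotentElem f) : f = eX (Kiselman.supp f) := by
    obtain ⟨N, hN⟩ := Kiselman.exists_pow_succ_eq_eX_supp f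
    rw [← hN, hf.pow_succ_eq]
  have equiv : Finset (Fin n) ≃ {f : Kiselman n // IsIdempotentElem f} :=
    Equiv.ofBijective (fun X => ⟨eX X, Kiselman.isIdempotentElem_eX X⟩)
      ⟨fun X Y h => Kiselman.eX_injective (congrArg Subtype.val h),
        fun f => ⟨Kiselman.supp f.1, Subtype.ext (eq_eX_supp f.1 f.2).symm⟩⟩
  refine ⟨Kiselman.isIdempotentElem_eX, fun f hf => ⟨_, eq_eX_supp f hf⟩, ?_⟩
  rw [← Nat.card_congr equiv]
  simp
end

section
/- Define the height of an n×n integer matrix A as h(A) = Σ_{i=1}^n 2^i · (number of nonzero entries in row i), and for x ∈ K_n set h(x) = h(ψ_n(x)). Then for any α ∈ K_n and any generator a_i with a_i α ≠ α, one has h(a_i α) < h(α); consequently, for α, β ∈ K_n with αβ ≠ β, h(αβ) < h(β). -/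
/-- The matrix `A_i` (0-indexed) of Kiselman's representation. -/
def Amat (n : ℕ) (i : Fin n) : Matrix (Fin n) (Fin n) ℤ := fun r c =>
  if r = i then 0 else if c = i then (if r < i then 1 else 0) else if r = c then 1 else 0

/-- The height of a matrix: `h(A) = Σᵢ 2^i · #{j : A i j ≠ 0}` (rows 1-indexed). -/
def mheight (n : ℕ) (A : Matrix (Fin n) (Fin n) ℤ) : ℕ :=
  ∑ i : Fin n, 2 ^ ((i : ℕ) + 1) * (Finset.univ.filter fun j => A i j ≠ 0).card

variable {n : ℕ}

lemma kis_sound {a b : FreeMonoid (Fin n)} (h : KisRel n a b) : kmk n a = kmk n b :=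
  Quotient.sound (ConGen.Rel.of a b h)

lemma ka_eq (i : Fin n) : kmk n (.of i) = ka i := rfl

lemma kis_idem (i : Fin n) : ka i * ka i = ka i := by
  rw [← ka_eq, ← map_mul]
  exact kis_sound (KisRel.idem i)

lemma kis_braid₁ {i j : Fin n} (h : i < j) : ka i * ka j * ka i = ka j * ka i := by
  rw [← ka_eq i, ← ka_eq j, ← map_mul, ← map_mul]
  exact kis_sound (KisRel.braid₁ h)

lemma amat_mul_apply (p : Fin n) (M : Matrix (Fin n) (Fin n) ℤ) (r c : Fin n) :
    (Amat n p * M) r c = if r = p then 0 else M r c + if r < p then M p c else 0 := by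
  rw [Matrix.mul_apply]
  by_cases hrp : r = p
  · subst hrp
    rw [if_pos rfl]
    exact Finset.sum_eq_zero fun k _ => by simp [Amat]
  · rw [if_neg hrp]
    have key : ∀ k : Fin n, Amat n p r k * M k c =
        (if k = r then M r c else 0) + (if k = p then (if r < p then M p c else 0) else 0) := by
      intro k
      by_cases hkr : k = r
      · subst hkr
        have : k ≠ p := hrp
        simp [Amat, hrp, this]
      · by_cases hkp : k = p
        · subst hkp
          simp only [Amat, if_neg hrp, if_pos rfl, if_neg hkr, if_pos]
          split_ifs <;> simp [hkr]
        · simp [Amat, hrp, hkp, hkr, Ne.symm hkr]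
    rw [Finset.sum_congr rfl fun k _ => key k, Finset.sum_add_distrib,
      Finset.sum_ite_eq' Finset.univ r, Finset.sum_ite_eq' Finset.univ p]
    simp

lemma kis_braid₂ {i j : Fin n} (h : i < j) : ka j * ka i * ka j = ka j * ka i := by
  rw [← ka_eq i, ← ka_eq j, ← map_mul, ← map_mul]
  exact kis_sound (KisRel.braid₂ h)

variable (ψ : Kiselman n →* Matrix (Fin n) (Fin n) ℤ)
  (hψ : ∀ i : Fin n, ψ (ka i) = Amat n i.rev)

include hψ in
lemma psi_word_nonneg (l : List (Fin n)) :
    ∀ r c, 0 ≤ ψ (kmk n (FreeMonoid.ofList l)) r c := by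
  induction l with
  | nil =>
    intro r c
    rw [FreeMonoid.ofList_nil, map_one, map_one, Matrix.one_apply]
    split_ifs <;> norm_num
  | cons a l ih =>
    intro r c
    rw [FreeMonoid.ofList_cons, map_mul, map_mul, ka_eq, hψ, Matrix.mul_apply]
    refine Finset.sum_nonneg fun k _ => mul_nonneg ?_ (ih k c)
    unfold Amat; split_ifs <;> norm_num

include hψ in
lemma row_zero_fix (l : List (Fin n)) : ∀ i : Fin n,
    (∀ c, ψ (kmk n (FreeMonoid.ofList l)) i.rev c = 0) →
    ka i * kmk n (FreeMonoid.ofList l) = kmk n (FreeMonoid.ofList l) := by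
  induction l with
  | nil =>
    intro i h
    exfalso
    have := h i.rev
    rw [FreeMonoid.ofList_nil, map_one, map_one, Matrix.one_apply_eq] at this
    norm_num at this
  | cons a l ih =>
    intro i h
    rw [FreeMonoid.ofList_cons, map_mul, ka_eq] at h ⊢
    by_cases hai : a = i
    · subst hai
      rw [← mul_assoc, kis_idem]
    · have hrev : i.rev ≠ a.rev := fun hr => hai (Fin.rev_injective hr).symm
      have key : ∀ c, ψ (ka a * kmk n (FreeMonoid.ofList l)) i.rev c =
          ψ (kmk n (FreeMonoid.ofList l)) i.rev c +
            if i.rev < a.rev then ψ (kmk n (FreeMonoid.ofList l)) a.rev c else 0 := by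
        intro c
        rw [map_mul, hψ, amat_mul_apply, if_neg hrev]
      by_cases hlt : i.rev < a.rev
      · -- both rows of the tail vanish
        have hz : ∀ c, ψ (kmk n (FreeMonoid.ofList l)) i.rev c = 0 ∧
            ψ (kmk n (FreeMonoid.ofList l)) a.rev c = 0 := by
          intro c
          have h1 := h c
          rw [key c, if_pos hlt] at h1
          have n1 := psi_word_nonneg ψ hψ l i.rev c
          have n2 := psi_word_nonneg ψ hψ l a.rev c
          constructor <;> linarith
        have hi := ih i fun c => (hz c).1
        have ha := ih a fun c => (hz c).2
        rw [ha, hi]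
      · have hz : ∀ c, ψ (kmk n (FreeMonoid.ofList l)) i.rev c = 0 := by
          intro c
          have h1 := h c
          rwa [key c, if_neg hlt, add_zero] at h1
        have hi := ih i hz
        have hia : i < a := by
          rcases lt_or_eq_of_le (not_lt.mp hlt) with h' | h'
          · exact Fin.rev_lt_rev.mp h'
          · exact absurd h'.symm hrev
        calc ka i * (ka a * kmk n (FreeMonoid.ofList l))
            = ka i * (ka a * (ka i * kmk n (FreeMonoid.ofList l))) := by rw [hi]
          _ = (ka i * ka a * ka i) * kmk n (FreeMonoid.ofList l) := by
              simp only [mul_assoc]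
          _ = (ka a * ka i) * kmk n (FreeMonoid.ofList l) := by rw [kis_braid₁ hia]
          _ = ka a * (ka i * kmk n (FreeMonoid.ofList l)) := by rw [mul_assoc]
          _ = ka a * kmk n (FreeMonoid.ofList l) := by rw [hi]

lemma sum_pow_lt (m : ℕ) : ∑ k ∈ Finset.range m, 2 ^ (k + 1) < 2 ^ (m + 1) := by
  induction m with
  | zero => simp
  | succ m ih =>
    rw [Finset.sum_range_succ, pow_succ 2 (m + 1)]
    omega

lemma filter_sum_lt (m : Fin n) :
    ∑ r ∈ Finset.univ.filter (fun r : Fin n => r < m), 2 ^ ((r : ℕ) + 1) <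
      2 ^ ((m : ℕ) + 1) := by
  have h1 : ∑ k ∈ (Finset.univ.filter (fun r : Fin n => r < m)).image Fin.val, 2 ^ (k + 1) =
      ∑ r ∈ Finset.univ.filter (fun r : Fin n => r < m), 2 ^ ((r : ℕ) + 1) :=
    Finset.sum_image fun x _ y _ h => Fin.val_injective h
  rw [← h1]
  refine lt_of_le_of_lt (Finset.sum_le_sum_of_subset ?_) (sum_pow_lt (m : ℕ))
  intro k hk
  simp only [Finset.mem_image, Finset.mem_filter, Finset.mem_univ, true_and,
    Finset.mem_range] at hk ⊢
  obtain ⟨r, hr, rfl⟩ := hk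
  exact hr

lemma mheight_lt (M : Matrix (Fin n) (Fin n) ℤ) (_hM : ∀ r c, 0 ≤ M r c) (m : Fin n)
    (hrow : ¬ ∀ c, M m c = 0) :
    mheight n (Amat n m * M) < mheight n M := by
  set f : Fin n → ℕ := fun r => (Finset.univ.filter fun j => (Amat n m * M) r j ≠ 0).card with hf
  set g : Fin n → ℕ := fun r => (Finset.univ.filter fun j => M r j ≠ 0).card with hg
  have hgm : 1 ≤ g m := by
    push_neg at hrow
    obtain ⟨c, hc⟩ := hrow
    have : c ∈ Finset.univ.filter fun j => M m j ≠ 0 := by simp [hc]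
    exact Finset.card_pos.mpr ⟨c, this⟩
  have hfm : f m = 0 := by
    rw [hf]
    simp only [Finset.card_eq_zero]
    apply Finset.filter_eq_empty_iff.mpr
    intro c _
    rw [amat_mul_apply, if_pos rfl]
    simp
  have hfeq : ∀ r : Fin n, r ≠ m → ¬ r < m → f r = g r := by
    intro r h1 h2
    apply congrArg Finset.card
    apply Finset.filter_congr
    intro c _
    rw [amat_mul_apply, if_neg h1, if_neg h2, add_zero]
  have hfle : ∀ r : Fin n, r ≠ m → r < m → f r ≤ g r + g m := by
    intro r h1 h2
    have hsub : (Finset.univ.filter fun j => (Amat n m * M) r j ≠ 0) ⊆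
        (Finset.univ.filter fun j => M r j ≠ 0) ∪ (Finset.univ.filter fun j => M m j ≠ 0) := by
      intro c hc
      simp only [Finset.mem_filter, Finset.mem_univ, true_and, Finset.mem_union] at hc ⊢
      rw [amat_mul_apply, if_neg h1, if_pos h2] at hc
      by_contra hcon
      push_neg at hcon
      rw [hcon.1, hcon.2] at hc
      exact hc (by ring)
    calc f r ≤ ((Finset.univ.filter fun j => M r j ≠ 0) ∪
          (Finset.univ.filter fun j => M m j ≠ 0)).card := Finset.card_le_card hsub
      _ ≤ g r + g m := Finset.card_union_le _ _
  -- split the sums at m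
  rw [mheight, mheight,
    ← Finset.sum_erase_add Finset.univ _ (Finset.mem_univ m),
    ← Finset.sum_erase_add Finset.univ _ (Finset.mem_univ m)]
  have step1 : ∑ r ∈ Finset.univ.erase m, 2 ^ ((r : ℕ) + 1) * f r ≤
      ∑ r ∈ Finset.univ.erase m, (2 ^ ((r : ℕ) + 1) * g r +
        if r < m then 2 ^ ((r : ℕ) + 1) * g m else 0) := by
    apply Finset.sum_le_sum
    intro r hr
    have hrm : r ≠ m := Finset.ne_of_mem_erase hr
    by_cases hlt : r < m
    · rw [if_pos hlt, ← Nat.mul_add]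
      exact Nat.mul_le_mul_left _ (hfle r hrm hlt)
    · rw [if_neg hlt, add_zero, hfeq r hrm hlt]
  have step2 : ∑ r ∈ Finset.univ.erase m, (if r < m then 2 ^ ((r : ℕ) + 1) * g m else 0) =
      (∑ r ∈ Finset.univ.filter (fun r : Fin n => r < m), 2 ^ ((r : ℕ) + 1)) * g m := by
    rw [Finset.sum_ite, Finset.sum_const_zero, add_zero, Finset.sum_mul]
    apply Finset.sum_congr
    · ext r
      simp only [Finset.mem_filter, Finset.mem_erase, Finset.mem_univ, true_and, and_true]
      constructor
      · exact fun ⟨_, h⟩ => h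
      · exact fun h => ⟨Fin.ne_of_lt h, h⟩
    · intros; rfl
  have step3 : (∑ r ∈ Finset.univ.filter (fun r : Fin n => r < m), 2 ^ ((r : ℕ) + 1)) * g m <
      2 ^ ((m : ℕ) + 1) * g m :=
    Nat.mul_lt_mul_of_lt_of_le (filter_sum_lt m) le_rfl (by omega)
  calc ∑ r ∈ Finset.univ.erase m, 2 ^ ((r : ℕ) + 1) * f r + 2 ^ ((m : ℕ) + 1) * f m
      = ∑ r ∈ Finset.univ.erase m, 2 ^ ((r : ℕ) + 1) * f r := by rw [hfm, Nat.mul_zero, add_zero]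
    _ ≤ ∑ r ∈ Finset.univ.erase m, (2 ^ ((r : ℕ) + 1) * g r +
        if r < m then 2 ^ ((r : ℕ) + 1) * g m else 0) := step1
    _ = ∑ r ∈ Finset.univ.erase m, 2 ^ ((r : ℕ) + 1) * g r +
        ∑ r ∈ Finset.univ.erase m, (if r < m then 2 ^ ((r : ℕ) + 1) * g m else 0) :=
      Finset.sum_add_distrib
    _ < ∑ r ∈ Finset.univ.erase m, 2 ^ ((r : ℕ) + 1) * g r + 2 ^ ((m : ℕ) + 1) * g m := by
        rw [step2]
        exact Nat.add_lt_add_left step3 _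

lemma exists_word (α : Kiselman n) : ∃ l : List (Fin n), α = kmk n (FreeMonoid.ofList l) := by
  obtain ⟨w, hw⟩ := PresentedMonoid.surjective_mk α
  exact ⟨w.toList, by rw [← hw, FreeMonoid.ofList_toList]; rfl⟩


/-- Lemma 5: if `aᵢ α ≠ α` then `h(aᵢ α) < h(α)`; consequently `αβ ≠ β` implies
`h(αβ) < h(β)`, where `h(x) = mheight (ψₙ x)` for Kiselman's representation `ψₙ`. -/
theorem kiselman_height_decreases (n : ℕ)
    (ψ : Kiselman n →* Matrix (Fin n) (Fin n) ℤ)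
    (hψ : ∀ i : Fin n, ψ (ka i) = Amat n i.rev) :
    (∀ (α : Kiselman n) (i : Fin n), ka i * α ≠ α →
      mheight n (ψ (ka i * α)) < mheight n (ψ α)) ∧
    (∀ α β : Kiselman n, α * β ≠ β →
      mheight n (ψ (α * β)) < mheight n (ψ β)) := by
  have part1 : ∀ (α : Kiselman n) (i : Fin n), ka i * α ≠ α →
      mheight n (ψ (ka i * α)) < mheight n (ψ α) := by
    intro α i hne
    obtain ⟨l, rfl⟩ := exists_word α
    have hnz : ¬ ∀ c, ψ (kmk n (FreeMonoid.ofList l)) i.rev c = 0 :=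
      fun hz => hne (row_zero_fix ψ hψ l i hz)
    have hmul : ψ (ka i * kmk n (FreeMonoid.ofList l)) =
        Amat n i.rev * ψ (kmk n (FreeMonoid.ofList l)) := by rw [map_mul, hψ]
    rw [hmul]
    exact mheight_lt _ (fun r c => psi_word_nonneg ψ hψ l r c) i.rev hnz
  refine ⟨part1, ?_⟩
  have part2 : ∀ l : List (Fin n), ∀ β : Kiselman n,
      kmk n (FreeMonoid.ofList l) * β ≠ β →
      mheight n (ψ (kmk n (FreeMonoid.ofList l) * β)) < mheight n (ψ β) := by
    intro l
    induction l with
    | nil =>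
      intro β h
      rw [FreeMonoid.ofList_nil, map_one, one_mul] at h
      exact absurd rfl h
    | cons a l ih =>
      intro β h
      have hrw : kmk n (FreeMonoid.ofList (a :: l)) * β =
          ka a * (kmk n (FreeMonoid.ofList l) * β) := by
        rw [FreeMonoid.ofList_cons, map_mul, ka_eq, mul_assoc]
      rw [hrw] at h ⊢
      by_cases hfix : kmk n (FreeMonoid.ofList l) * β = β
      · rw [hfix] at h ⊢
        exact part1 β a h
      · by_cases hfix2 : ka a * (kmk n (FreeMonoid.ofList l) * β) =
            kmk n (FreeMonoid.ofList l) * β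
        · rw [hfix2]
          exact ih β hfix
        · exact lt_trans (part1 _ a hfix2) (ih β hfix)
  intro α β h
  obtain ⟨l, rfl⟩ := exists_word α
  exact part2 l β h
end
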